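/- In a homogeneous-goods market where a set P of m' sellers joins the platform, every on-platform seller has the same maximum competitive price, equal to v̄(m') − v̄(m'−1), i.e., the m'-th largest value among buyers not transacting off-platform. -/
import Mathlib


open Finset

/-- A matching between buyers `B` and sellers `S` along edges of the bipartite graph `g`:
a set of (buyer, seller) pairs using only allowed edges, with each buyer and each seller
appearing at most once. -/
def IsMatching (B S : Finset ℕ) (g : ℕ → ℕ → Prop) (M : Finset (ℕ × ℕ)) : Prop :=
  (∀ e ∈ M, e.1 ∈ B ∧ e.2 ∈ S ∧ g e.1 e.2) ∧
  ∀ e ∈ M, ∀ e' ∈ M, e ≠ e' → e.1 ≠ e'.1 ∧ e.2 ≠ e'.2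

/-- `W B S g v` is the maximum total weight of a matching between buyers `B` and sellers `S`
along edges of `g`, where the weight of edge (i, j) is `v i j`. -/
noncomputable def W (B S : Finset ℕ) (g : ℕ → ℕ → Prop) (v : ℕ → ℕ → ℝ) : ℝ :=
  sSup {x | ∃ M : Finset (ℕ × ℕ), IsMatching B S g M ∧ x = ∑ e ∈ M, v e.1 e.2}

/-- The graph `g` augmented so that every seller in `P` (the on-platform sellers) is
connected to all buyers. -/
def gPlat (g : ℕ → ℕ → Prop) (P : Finset ℕ) : ℕ → ℕ → Prop :=
  fun i j => g i j ∨ j ∈ P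

/-- `topSum v A k` is the sum of the `k` largest values `v i` over `i ∈ A`
(or of all of them if `|A| < k`), expressed as the maximum sum over subsets of
`A` of size at most `k` (for nonnegative values). -/
noncomputable def topSum (v : ℕ → ℝ) (A : Finset ℕ) (k : ℕ) : ℝ :=
  sSup {x | ∃ T ⊆ A, T.card ≤ k ∧ x = ∑ i ∈ T, v i}

section helpers

variable {B S : Finset ℕ} {g : ℕ → ℕ → Prop} {M M' : Finset (ℕ × ℕ)}

lemma IsMatching.eq_of_fst (h : IsMatching B S g M) {e e' : ℕ × ℕ}
    (he : e ∈ M) (he' : e' ∈ M) (h1 : e.1 = e'.1) : e = e' := by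
  by_contra hne; exact (h.2 e he e' he' hne).1 h1

lemma IsMatching.eq_of_snd (h : IsMatching B S g M) {e e' : ℕ × ℕ}
    (he : e ∈ M) (he' : e' ∈ M) (h1 : e.2 = e'.2) : e = e' := by
  by_contra hne; exact (h.2 e he e' he' hne).2 h1

lemma IsMatching.subset (h : IsMatching B S g M) (hs : M' ⊆ M) : IsMatching B S g M' :=
  ⟨fun e he => h.1 e (hs he), fun e he e' he' hne => h.2 e (hs he) e' (hs he') hne⟩

lemma mem_fst_iff {b : ℕ} : b ∈ M.image Prod.fst ↔ ∃ s, (b, s) ∈ M := by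
  constructor
  · intro h
    obtain ⟨e, he, he1⟩ := mem_image.1 h
    exact ⟨e.2, by rwa [show (b, e.2) = e from Prod.ext he1.symm rfl]⟩
  · rintro ⟨s, hm⟩; exact mem_image.2 ⟨(b, s), hm, rfl⟩

lemma mem_snd_iff {s : ℕ} : s ∈ M.image Prod.snd ↔ ∃ b, (b, s) ∈ M := by
  constructor
  · intro h
    obtain ⟨e, he, he2⟩ := mem_image.1 h
    exact ⟨e.1, by rwa [show (e.1, s) = e from Prod.ext rfl he2.symm]⟩
  · rintro ⟨b, hm⟩; exact mem_image.2 ⟨(b, s), hm, rfl⟩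

lemma sum_matching (h : IsMatching B S g M) (v : ℕ → ℝ) :
    ∑ e ∈ M, v e.1 = ∑ b ∈ M.image Prod.fst, v b :=
  (Finset.sum_image (fun e he e' he' h1 => h.eq_of_fst he he' h1)).symm

lemma image_fst_erase (h : IsMatching B S g M) {a t : ℕ} (hat : (a, t) ∈ M) :
    (M.erase (a, t)).image Prod.fst = (M.image Prod.fst).erase a := by
  ext b
  simp only [Finset.mem_erase, mem_fst_iff]
  constructor
  · rintro ⟨s, hne, hs⟩
    refine ⟨fun hba => ?_, ⟨s, hs⟩⟩
    subst hba
    exact hne (h.eq_of_fst hs hat rfl)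
  · rintro ⟨hba, s, hs⟩
    exact ⟨s, fun he => hba (congrArg Prod.fst he), hs⟩

end helpers

section sSupLemmas

variable {B S : Finset ℕ} {g : ℕ → ℕ → Prop} {v : ℕ → ℝ}

lemma W_set_nonempty :
    {x | ∃ M : Finset (ℕ × ℕ), IsMatching B S g M ∧ x = ∑ e ∈ M, v e.1}.Nonempty :=
  ⟨0, ∅, ⟨fun e he => absurd he (Finset.notMem_empty e),
    fun e he => absurd he (Finset.notMem_empty e)⟩, by simp⟩

lemma W_set_bddAbove (hv : ∀ i, 0 ≤ v i) :
    BddAbove {x | ∃ M : Finset (ℕ × ℕ), IsMatching B S g M ∧ x = ∑ e ∈ M, v e.1} := by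
  refine ⟨∑ b ∈ B, v b, ?_⟩
  rintro x ⟨M, hM, rfl⟩
  rw [sum_matching hM]
  refine Finset.sum_le_sum_of_subset_of_nonneg ?_ (fun i _ _ => hv i)
  intro b hb
  obtain ⟨s, hs⟩ := mem_fst_iff.1 hb
  exact (hM.1 _ hs).1

lemma le_W (hv : ∀ i, 0 ≤ v i) {M : Finset (ℕ × ℕ)} (hM : IsMatching B S g M) :
    ∑ e ∈ M, v e.1 ≤ W B S g (fun i _ => v i) :=
  le_csSup (W_set_bddAbove hv) ⟨M, hM, rfl⟩

lemma topSum_set_nonempty {A : Finset ℕ} {k : ℕ} :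
    {x | ∃ T ⊆ A, T.card ≤ k ∧ x = ∑ i ∈ T, v i}.Nonempty :=
  ⟨0, ∅, Finset.empty_subset A, by simp⟩

lemma topSum_set_bddAbove (hv : ∀ i, 0 ≤ v i) {A : Finset ℕ} {k : ℕ} :
    BddAbove {x | ∃ T ⊆ A, T.card ≤ k ∧ x = ∑ i ∈ T, v i} := by
  refine ⟨∑ b ∈ A, v b, ?_⟩
  rintro x ⟨T, hT, _, rfl⟩
  exact Finset.sum_le_sum_of_subset_of_nonneg hT (fun i _ _ => hv i)

lemma le_topSum (hv : ∀ i, 0 ≤ v i) {A T : Finset ℕ} {k : ℕ} (hT : T ⊆ A)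
    (hk : T.card ≤ k) : ∑ i ∈ T, v i ≤ topSum v A k :=
  le_csSup (topSum_set_bddAbove hv) ⟨T, hT, hk, rfl⟩

end sSupLemmas

section exchange

variable {B S : Finset ℕ} {g : ℕ → ℕ → Prop}

lemma swap_matching {M₁ : Finset (ℕ × ℕ)} (hM₁ : IsMatching B S g M₁) {x x' s : ℕ}
    (hx's : (x', s) ∈ M₁) (hx : x ∉ M₁.image Prod.fst)
    (hxB : x ∈ B) (hsS : s ∈ S) (hg : g x s) :
    IsMatching B S g (insert (x, s) (M₁.erase (x', s))) ∧
    (insert (x, s) (M₁.erase (x', s))).image Prod.fst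
      = insert x ((M₁.image Prod.fst).erase x') := by
  have hkey : ∀ e ∈ M₁.erase (x', s), e.1 ≠ x ∧ e.2 ≠ s := by
    intro e he
    rw [Finset.mem_erase] at he
    constructor
    · intro h1
      exact hx (mem_fst_iff.2 ⟨e.2,
        by rw [show (x, e.2) = e from Prod.ext h1.symm rfl]; exact he.2⟩)
    · intro h2
      exact he.1 (hM₁.eq_of_snd he.2 hx's h2)
  constructor
  · constructor
    · intro e he
      rcases Finset.mem_insert.1 he with rfl | he
      · exact ⟨hxB, hsS, hg⟩
      · exact hM₁.1 e (Finset.erase_subset _ _ he)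
    · intro e he e' he' hne
      rcases Finset.mem_insert.1 he with rfl | he <;>
        rcases Finset.mem_insert.1 he' with rfl | he'
      · exact absurd rfl hne
      · exact ⟨fun h => (hkey e' he').1 h.symm, fun h => (hkey e' he').2 h.symm⟩
      · exact ⟨(hkey e he).1, (hkey e he).2⟩
      · exact hM₁.2 e (Finset.erase_subset _ _ he) e' (Finset.erase_subset _ _ he') hne
  · rw [Finset.image_insert, image_fst_erase hM₁ hx's]

/-- Core alternating-path exchange lemma, by induction on the size of `M₀`. -/
lemma exchange_aux : ∀ (n : ℕ) (M₀ M₁ : Finset (ℕ × ℕ)) (C : Finset ℕ) (x : ℕ),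
    M₀.card ≤ n →
    IsMatching B S g M₀ → IsMatching B S g M₁ →
    x ∈ M₀.image Prod.fst → x ∉ M₁.image Prod.fst → x ∈ C →
    (∀ c ∈ C, c ∉ M₀.image Prod.fst → ∃ t, (c, t) ∈ M₁ ∧ t ∉ M₀.image Prod.snd) →
    ∃ M₂ : Finset (ℕ × ℕ), IsMatching B S g M₂ ∧
      (M₂.image Prod.fst = insert x (M₁.image Prod.fst) ∨
       ∃ y ∈ M₁.image Prod.fst, y ∉ C ∧
         M₂.image Prod.fst = (insert x (M₁.image Prod.fst)).erase y) := by
  intro n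
  induction n with
  | zero =>
    intro M₀ M₁ C x hcard _ _ hx0 _ _ _
    rw [Nat.le_zero, Finset.card_eq_zero] at hcard
    subst hcard
    simp at hx0
  | succ n ih =>
    intro M₀ M₁ C x hcard hM₀ hM₁ hx0 hx1 hxC hinv
    obtain ⟨s, hxs⟩ := mem_fst_iff.1 hx0
    have hedge := hM₀.1 _ hxs
    by_cases hs1 : s ∈ M₁.image Prod.snd
    · obtain ⟨x', hx's⟩ := mem_snd_iff.1 hs1
      have hxx' : x' ≠ x := by
        rintro rfl
        exact hx1 (mem_fst_iff.2 ⟨s, hx's⟩)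
      obtain ⟨hm', himg'⟩ := swap_matching hM₁ hx's hx1 hedge.1 hedge.2.1 hedge.2.2
      by_cases hx'C : x' ∈ C
      · -- recurse
        have hx'0 : x' ∈ M₀.image Prod.fst := by
          by_contra hcon
          obtain ⟨t, htM₁, ht⟩ := hinv x' hx'C hcon
          have : t = s := congrArg Prod.snd (hM₁.eq_of_fst htM₁ hx's rfl)
          subst this
          exact ht (mem_snd_iff.2 ⟨x, hxs⟩)
        have hM₀' : IsMatching B S g (M₀.erase (x, s)) :=
          hM₀.subset (Finset.erase_subset _ _)
        have hcard' : (M₀.erase (x, s)).card ≤ n := by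
          rw [Finset.card_erase_of_mem hxs]
          omega
        have hx'0' : x' ∈ (M₀.erase (x, s)).image Prod.fst := by
          rw [image_fst_erase hM₀ hxs]
          exact Finset.mem_erase.2 ⟨hxx', hx'0⟩
        have hx'1' : x' ∉ (insert (x, s) (M₁.erase (x', s))).image Prod.fst := by
          rw [himg']
          simp only [Finset.mem_insert, Finset.mem_erase]
          push_neg
          exact ⟨hxx', fun h => absurd rfl h⟩
        have hinv' : ∀ c ∈ C, c ∉ (M₀.erase (x, s)).image Prod.fst →
            ∃ t, (c, t) ∈ insert (x, s) (M₁.erase (x', s)) ∧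
              t ∉ (M₀.erase (x, s)).image Prod.snd := by
          intro c hcC hc
          rw [image_fst_erase hM₀ hxs] at hc
          by_cases hcx : c = x
          · subst hcx
            refine ⟨s, Finset.mem_insert_self _ _, ?_⟩
            intro hcon
            obtain ⟨b, hb⟩ := mem_snd_iff.1 hcon
            rw [Finset.mem_erase] at hb
            exact hb.1 (hM₀.eq_of_snd hb.2 hxs rfl)
          · have hc0 : c ∉ M₀.image Prod.fst := by
              intro hcon
              exact hc (Finset.mem_erase.2 ⟨hcx, hcon⟩)
            obtain ⟨t, htM₁, ht⟩ := hinv c hcC hc0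
            have hts : t ≠ s := by
              rintro rfl
              exact ht (mem_snd_iff.2 ⟨x, hxs⟩)
            refine ⟨t, Finset.mem_insert_of_mem (Finset.mem_erase.2 ⟨?_, htM₁⟩), ?_⟩
            · intro hcon
              exact hts (congrArg Prod.snd hcon)
            · intro hcon
              obtain ⟨b, hb⟩ := mem_snd_iff.1 hcon
              exact ht (mem_snd_iff.2 ⟨b, Finset.erase_subset _ _ hb⟩)
        obtain ⟨M₂, hM₂, hM₂img⟩ := ih (M₀.erase (x, s)) _ C x' hcard' hM₀' hm'
          hx'0' hx'1' hx'C hinv'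
        have hins : insert x' ((insert (x, s) (M₁.erase (x', s))).image Prod.fst)
            = insert x (M₁.image Prod.fst) := by
          rw [himg', Finset.insert_comm, Finset.insert_erase (mem_fst_iff.2 ⟨s, hx's⟩)]
        refine ⟨M₂, hM₂, ?_⟩
        rcases hM₂img with h | ⟨y, hy1, hy2, hy3⟩
        · left; rw [h, hins]
        · right
          refine ⟨y, ?_, hy2, by rw [hy3, hins]⟩
          rw [himg'] at hy1
          rcases Finset.mem_insert.1 hy1 with rfl | hy1
          · exact absurd hxC hy2
          · exact Finset.mem_of_mem_erase hy1
      · -- x' leaves the matching: exchange witness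
        refine ⟨insert (x, s) (M₁.erase (x', s)), hm', Or.inr ⟨x', mem_fst_iff.2 ⟨s, hx's⟩,
          hx'C, ?_⟩⟩
        rw [himg', Finset.erase_insert_of_ne (fun h => hxx' h.symm)]
    · -- s is free in M₁: augment
      refine ⟨insert (x, s) M₁, ?_, Or.inl (by rw [Finset.image_insert])⟩
      constructor
      · intro e he
        rcases Finset.mem_insert.1 he with rfl | he
        · exact hedge
        · exact hM₁.1 e he
      · intro e he e' he' hne
        have hkey : ∀ e'' ∈ M₁, e''.1 ≠ x ∧ e''.2 ≠ s := by
          intro e'' he''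
          constructor
          · intro h1
            exact hx1 (mem_fst_iff.2 ⟨e''.2,
              by rwa [show (x, e''.2) = e'' from Prod.ext h1.symm rfl]⟩)
          · intro h2
            exact hs1 (mem_snd_iff.2 ⟨e''.1,
              by rwa [show (e''.1, s) = e'' from Prod.ext rfl h2.symm]⟩)
        rcases Finset.mem_insert.1 he with rfl | he <;>
          rcases Finset.mem_insert.1 he' with rfl | he'
        · exact absurd rfl hne
        · exact ⟨fun h => (hkey e' he').1 h.symm, fun h => (hkey e' he').2 h.symm⟩
        · exact ⟨(hkey e he).1, (hkey e he).2⟩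
        · exact hM₁.2 e he e' he' hne

end exchange

section mainBound

variable {B SP : Finset ℕ} {g : ℕ → ℕ → Prop} {v : ℕ → ℝ}

lemma main_bound (hv : ∀ i, 0 ≤ v i) {M₀ : Finset (ℕ × ℕ)}
    (hM₀ : IsMatching B SP g M₀) {W₀ : ℝ}
    (hmax : ∀ M₁ : Finset (ℕ × ℕ), IsMatching B SP g M₁ →
      ∑ b ∈ M₁.image Prod.fst, v b ≤ W₀)
    (q : ℕ) :
    ∀ (n : ℕ) (M₁ : Finset (ℕ × ℕ)) (T : Finset ℕ),
      (T ∩ M₀.image Prod.fst).card ≤ n →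
      IsMatching B SP g M₁ → T ⊆ B → Disjoint T (M₁.image Prod.fst) → T.card ≤ q →
      ∑ b ∈ M₁.image Prod.fst, v b + ∑ i ∈ T, v i
        ≤ W₀ + topSum v (B \ M₀.image Prod.fst) q := by
  intro n
  induction n with
  | zero =>
    intro M₁ T hn hM₁ hTB hdis hTq
    rw [Nat.le_zero, Finset.card_eq_zero] at hn
    have hT' : T ⊆ B \ M₀.image Prod.fst := by
      intro t ht
      rw [Finset.mem_sdiff]
      refine ⟨hTB ht, fun hcon => ?_⟩
      have : t ∈ T ∩ M₀.image Prod.fst := Finset.mem_inter.2 ⟨ht, hcon⟩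
      rw [hn] at this
      exact absurd this (Finset.notMem_empty t)
    exact add_le_add (hmax M₁ hM₁) (le_topSum hv hT' hTq)
  | succ n ih =>
    intro M₁ T hn hM₁ hTB hdis hTq
    by_cases hne : (T ∩ M₀.image Prod.fst) = ∅
    · have hT' : T ⊆ B \ M₀.image Prod.fst := by
        intro t ht
        rw [Finset.mem_sdiff]
        refine ⟨hTB ht, fun hcon => ?_⟩
        have : t ∈ T ∩ M₀.image Prod.fst := Finset.mem_inter.2 ⟨ht, hcon⟩
        rw [hne] at this
        exact absurd this (Finset.notMem_empty t)
      exact add_le_add (hmax M₁ hM₁) (le_topSum hv hT' hTq)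
    · obtain ⟨x, hx⟩ := Finset.nonempty_iff_ne_empty.2 hne
      rw [Finset.mem_inter] at hx
      have hxT := hx.1
      have hx0 := hx.2
      have hx1 : x ∉ M₁.image Prod.fst := Finset.disjoint_left.1 hdis hxT
      have hinv : ∀ c ∈ M₀.image Prod.fst, c ∉ M₀.image Prod.fst →
          ∃ t, (c, t) ∈ M₁ ∧ t ∉ M₀.image Prod.snd := fun c hc hc' => absurd hc hc'
      obtain ⟨M₂, hM₂, himg⟩ := exchange_aux M₀.card M₀ M₁ (M₀.image Prod.fst) x
        le_rfl hM₀ hM₁ hx0 hx1 hx0 hinv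
      have hcard_inter : ((T.erase x) ∩ M₀.image Prod.fst).card ≤ n := by
        have : (T.erase x) ∩ M₀.image Prod.fst = (T ∩ M₀.image Prod.fst).erase x := by
          ext a
          simp only [Finset.mem_inter, Finset.mem_erase]
          tauto
        rw [this, Finset.card_erase_of_mem (Finset.mem_inter.2 hx)]
        omega
      have hxA₁ : x ∉ M₁.image Prod.fst := hx1
      rcases himg with h | ⟨y, hyA₁, hyA₀, h⟩
      · -- M₂ covers buyers(M₁) ∪ {x}
        have hsum2 : ∑ b ∈ M₂.image Prod.fst, v b
            = ∑ b ∈ M₁.image Prod.fst, v b + v x := by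
          rw [h, Finset.sum_insert hxA₁]; ring
        have hsumT : ∑ i ∈ T.erase x, v i = ∑ i ∈ T, v i - v x := by
          have := Finset.sum_erase_add T v hxT
          linarith
        have hdis' : Disjoint (T.erase x) (M₂.image Prod.fst) := by
          rw [h, Finset.disjoint_right]
          intro a ha hae
          rcases Finset.mem_insert.1 ha with rfl | ha
          · exact (Finset.notMem_erase a T) hae
          · exact Finset.disjoint_left.1 hdis (Finset.erase_subset _ _ hae) ha
        have := ih M₂ (T.erase x) hcard_inter hM₂
          (fun t ht => hTB (Finset.erase_subset _ _ ht)) hdis'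
          (le_trans (Finset.card_le_card (Finset.erase_subset _ _)) hTq)
        rw [hsum2, hsumT] at this
        linarith
      · -- exchange: x in, y out
        have hyx : y ≠ x := fun hcon => hxA₁ (hcon ▸ hyA₁)
        have hyT : y ∉ T := fun hcon => Finset.disjoint_left.1 hdis hcon hyA₁
        have hyB : y ∈ B := by
          obtain ⟨t, ht⟩ := mem_fst_iff.1 hyA₁
          exact (hM₁.1 _ ht).1
        set T' := insert y (T.erase x) with hT'def
        have hsum2 : ∑ b ∈ M₂.image Prod.fst, v b
            = ∑ b ∈ M₁.image Prod.fst, v b + v x - v y := by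
          rw [h]
          have h1 : ∑ b ∈ (insert x (M₁.image Prod.fst)).erase y, v b + v y
              = ∑ b ∈ insert x (M₁.image Prod.fst), v b :=
            Finset.sum_erase_add _ _ (Finset.mem_insert_of_mem hyA₁)
          rw [Finset.sum_insert hxA₁] at h1
          linarith
        have hsumT : ∑ i ∈ T', v i = ∑ i ∈ T, v i - v x + v y := by
          rw [hT'def, Finset.sum_insert (fun hcon =>
            hyT (Finset.erase_subset _ _ hcon))]
          have := Finset.sum_erase_add T v hxT
          linarith
        have hT'B : T' ⊆ B := by
          intro t ht
          rcases Finset.mem_insert.1 ht with rfl | ht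
          · exact hyB
          · exact hTB (Finset.erase_subset _ _ ht)
        have hT'card : T'.card ≤ q := by
          rw [hT'def, Finset.card_insert_of_notMem (fun hcon =>
            hyT (Finset.erase_subset _ _ hcon)), Finset.card_erase_of_mem hxT]
          have h1 : 1 ≤ T.card := Finset.card_pos.2 ⟨x, hxT⟩
          omega
        have hT'inter : (T' ∩ M₀.image Prod.fst).card ≤ n := by
          have heq : T' ∩ M₀.image Prod.fst = (T ∩ M₀.image Prod.fst).erase x := by
            ext a
            rw [hT'def]
            simp only [Finset.mem_inter, Finset.mem_erase, Finset.mem_insert]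
            constructor
            · rintro ⟨rfl | ⟨hax, haT⟩, ha0⟩
              · exact absurd ha0 hyA₀
              · exact ⟨hax, haT, ha0⟩
            · rintro ⟨hax, haT, ha0⟩
              exact ⟨Or.inr ⟨hax, haT⟩, ha0⟩
          rw [heq, Finset.card_erase_of_mem (Finset.mem_inter.2 hx)]
          omega
        have hdis' : Disjoint T' (M₂.image Prod.fst) := by
          rw [h, Finset.disjoint_left]
          intro a ha hae
          rw [Finset.mem_erase, Finset.mem_insert] at hae
          rcases Finset.mem_insert.1 ha with rfl | ha
          · exact hae.1 rfl
          · rcases hae.2 with rfl | hae2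
            · exact (Finset.notMem_erase a T) ha
            · exact Finset.disjoint_left.1 hdis (Finset.erase_subset _ _ ha) hae2
        have := ih M₂ T' hT'inter hM₂ hT'B hdis' hT'card
        rw [hsum2, hsumT] at this
        linarith

end mainBound

lemma exists_inj : ∀ (T Q : Finset ℕ), T.card ≤ Q.card →
    ∃ f : ℕ → ℕ, (∀ t ∈ T, ∀ t' ∈ T, f t = f t' → t = t') ∧ ∀ t ∈ T, f t ∈ Q := by
  intro T
  induction T using Finset.induction_on with
  | empty => intro Q _; exact ⟨id, by simp, by simp⟩
  | @insert a T ha ih =>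
    intro Q hcard
    rw [Finset.card_insert_of_notMem ha] at hcard
    have hQne : Q.Nonempty := Finset.card_pos.1 (by omega)
    obtain ⟨q, hq⟩ := hQne
    have hcard' : T.card ≤ (Q.erase q).card := by
      rw [Finset.card_erase_of_mem hq]; omega
    obtain ⟨f, hfinj, hfmem⟩ := ih (Q.erase q) hcard'
    refine ⟨fun t => if t = a then q else f t, ?_, ?_⟩
    · intro t ht t' ht' hftt'
      simp only at hftt'
      by_cases h1 : t = a <;> by_cases h2 : t' = a <;>
        simp only [h1, h2, if_pos, if_neg, if_true] at hftt'
      · rw [h1, h2]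
      · exfalso
        have ht'T : t' ∈ T := (Finset.mem_insert.1 ht').resolve_left h2
        exact (Finset.mem_erase.1 (hfmem t' ht'T)).1 hftt'.symm
      · exfalso
        have htT : t ∈ T := (Finset.mem_insert.1 ht).resolve_left h1
        exact (Finset.mem_erase.1 (hfmem t htT)).1 hftt'
      · exact hfinj t ((Finset.mem_insert.1 ht).resolve_left h1)
          t' ((Finset.mem_insert.1 ht').resolve_left h2) hftt'
    · intro t ht
      by_cases h1 : t = a
      · simp only [h1, if_pos, if_true]; exact hq
      · simp only [h1, if_neg, if_false]
        exact Finset.erase_subset _ _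
          (hfmem t ((Finset.mem_insert.1 ht).resolve_left h1))

lemma W_plat (B S P : Finset ℕ) (g : ℕ → ℕ → Prop) (v : ℕ → ℝ) (hv : ∀ i, 0 ≤ v i)
    (M₀ : Finset (ℕ × ℕ)) (hM₀ : IsMatching B (S \ P) g M₀)
    (hopt : ∑ e ∈ M₀, v e.1 = W B (S \ P) g (fun i _ => v i))
    (Q : Finset ℕ) (hQ : Q ⊆ P) :
    W B ((S \ P) ∪ Q) (gPlat g P) (fun i _ => v i)
      = ∑ e ∈ M₀, v e.1 + topSum v (B \ M₀.image Prod.fst) Q.card := by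
  have hmax : ∀ M₁ : Finset (ℕ × ℕ), IsMatching B (S \ P) g M₁ →
      ∑ b ∈ M₁.image Prod.fst, v b ≤ ∑ e ∈ M₀, v e.1 := by
    intro M₁ hM₁
    rw [← sum_matching hM₁ v, hopt]
    exact le_W hv hM₁
  apply le_antisymm
  · -- upper bound
    apply csSup_le W_set_nonempty
    rintro x ⟨M, hM, rfl⟩
    have hM₁ : IsMatching B (S \ P) g (M.filter (fun e => e.2 ∈ S \ P)) := by
      constructor
      · intro e he
        rw [Finset.mem_filter] at he
        have h1 := hM.1 e he.1
        refine ⟨h1.1, he.2, ?_⟩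
        rcases h1.2.2 with h | h
        · exact h
        · exact absurd h (Finset.mem_sdiff.1 he.2).2
      · intro e he e' he' hne
        exact hM.2 e (Finset.filter_subset _ _ he) e' (Finset.filter_subset _ _ he') hne
    set M₂ := M.filter (fun e => ¬ e.2 ∈ S \ P) with hM₂def
    have hM₂Q : ∀ e ∈ M₂, e.2 ∈ Q := by
      intro e he
      rw [hM₂def, Finset.mem_filter] at he
      rcases Finset.mem_union.1 (hM.1 e he.1).2.1 with h | h
      · exact absurd h he.2
      · exact h
    set T := M₂.image Prod.fst with hTdef
    have hsum2 : ∑ e ∈ M₂, v e.1 = ∑ i ∈ T, v i :=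
      sum_matching (hM.subset (Finset.filter_subset _ _)) v
    have hsplit : ∑ e ∈ M, v e.1
        = ∑ b ∈ (M.filter (fun e => e.2 ∈ S \ P)).image Prod.fst, v b + ∑ i ∈ T, v i := by
      rw [← sum_matching hM₁ v, ← hsum2]
      exact (Finset.sum_filter_add_sum_filter_not M _ _).symm
    have hTB : T ⊆ B := by
      intro b hb
      obtain ⟨s, hs⟩ := mem_fst_iff.1 hb
      exact (hM.1 _ (Finset.filter_subset _ _ hs)).1
    have hTcard : T.card ≤ Q.card := by
      calc T.card ≤ M₂.card := Finset.card_image_le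
        _ ≤ Q.card := by
          apply Finset.card_le_card_of_injOn Prod.snd hM₂Q
          intro e he e' he' h
          exact (hM.subset (Finset.filter_subset _ _)).eq_of_snd he he' h
    have hdis : Disjoint T ((M.filter (fun e => e.2 ∈ S \ P)).image Prod.fst) := by
      rw [Finset.disjoint_left]
      intro b hb hb'
      obtain ⟨s, hs⟩ := mem_fst_iff.1 hb
      obtain ⟨s', hs'⟩ := mem_fst_iff.1 hb'
      have heq : ((b, s) : ℕ × ℕ) = (b, s') :=
        hM.eq_of_fst (Finset.filter_subset _ _ hs) (Finset.filter_subset _ _ hs') rfl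
      have hs2 := (Finset.mem_filter.1 hs).2
      have hs'2 := (Finset.mem_filter.1 hs').2
      rw [show s = s' from congrArg Prod.snd heq] at hs2
      exact hs2 hs'2
    have := main_bound hv hM₀ hmax Q.card (T ∩ M₀.image Prod.fst).card
      (M.filter (fun e => e.2 ∈ S \ P)) T le_rfl hM₁ hTB hdis hTcard
    rw [hsplit]
    linarith
  · -- lower bound
    have key : ∀ x ∈ {x | ∃ T ⊆ B \ M₀.image Prod.fst, T.card ≤ Q.card ∧ x = ∑ i ∈ T, v i},
        x ≤ W B ((S \ P) ∪ Q) (gPlat g P) (fun i _ => v i) - ∑ e ∈ M₀, v e.1 := by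
      rintro x ⟨T, hT, hTcard, rfl⟩
      obtain ⟨f, hfinj, hfmem⟩ := exists_inj T Q hTcard
      set M := M₀ ∪ T.image (fun b => (b, f b)) with hMdef
      have hTkey : ∀ b ∈ T, b ∈ B ∧ b ∉ M₀.image Prod.fst := by
        intro b hb
        have := hT hb
        rw [Finset.mem_sdiff] at this
        exact this
      have hdisM : Disjoint M₀ (T.image (fun b => (b, f b))) := by
        rw [Finset.disjoint_right]
        intro e he hcon
        obtain ⟨b, hb, rfl⟩ := Finset.mem_image.1 he
        exact (hTkey b hb).2 (mem_fst_iff.2 ⟨f b, hcon⟩)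
      have hMmatch : IsMatching B ((S \ P) ∪ Q) (gPlat g P) M := by
        constructor
        · intro e he
          rcases Finset.mem_union.1 he with he | he
          · have h1 := hM₀.1 e he
            exact ⟨h1.1, Finset.mem_union_left _ h1.2.1, Or.inl h1.2.2⟩
          · obtain ⟨b, hb, rfl⟩ := Finset.mem_image.1 he
            exact ⟨(hTkey b hb).1, Finset.mem_union_right _ (hfmem b hb),
              Or.inr (hQ (hfmem b hb))⟩
        · intro e he e' he' hne
          have himgkey : ∀ a ∈ M₀, ∀ b ∈ T, a.1 ≠ b ∧ a.2 ≠ f b := by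
            intro a haM b hb
            constructor
            · intro h1
              exact (hTkey b hb).2 (mem_fst_iff.2 ⟨a.2,
                by rw [← h1]; rwa [show (a.1, a.2) = a from rfl]⟩)
            · intro h2
              have := (hM₀.1 a haM).2.1
              rw [Finset.mem_sdiff] at this
              exact this.2 (h2 ▸ hQ (hfmem b hb))
          rcases Finset.mem_union.1 he with he | he <;>
            rcases Finset.mem_union.1 he' with he' | he'
          · exact hM₀.2 e he e' he' hne
          · obtain ⟨b, hb, rfl⟩ := Finset.mem_image.1 he'
            exact himgkey e he b hb
          · obtain ⟨b, hb, rfl⟩ := Finset.mem_image.1 he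
            have := himgkey e' he' b hb
            exact ⟨fun h => this.1 h.symm, fun h => this.2 h.symm⟩
          · obtain ⟨b, hb, rfl⟩ := Finset.mem_image.1 he
            obtain ⟨b', hb', rfl⟩ := Finset.mem_image.1 he'
            have hbb' : b ≠ b' := fun h => hne (by rw [h])
            exact ⟨hbb', fun h => hbb' (hfinj b hb b' hb' h)⟩
      have hsum : ∑ e ∈ M, v e.1 = ∑ e ∈ M₀, v e.1 + ∑ i ∈ T, v i := by
        rw [hMdef, Finset.sum_union hdisM]
        congr 1
        exact Finset.sum_image (fun b _ b' _ h => congrArg Prod.fst h)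
      have := le_W hv hMmatch
      rw [hsum] at this
      linarith
    have := csSup_le topSum_set_nonempty key
    rw [topSum] at *
    linarith

/-- In a homogeneous-goods market with on-platform sellers `P`, every on-platform seller
has the same maximum competitive price, namely `v̄(m') − v̄(m'−1)` where `m' = |P|` and
`v̄(k)` is the sum of the `k` largest values of buyers left unmatched by an optimal
off-platform matching `M₀`. -/
theorem homogeneous_on_platform_price (B S P : Finset ℕ) (hP : P ⊆ S)
    (g : ℕ → ℕ → Prop) (v : ℕ → ℝ) (hv : ∀ i, 0 ≤ v i)
    (M₀ : Finset (ℕ × ℕ)) (hM₀ : IsMatching B (S \ P) g M₀)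
    (hopt : ∑ e ∈ M₀, v e.1 = W B (S \ P) g (fun i _ => v i))
    (j : ℕ) (hj : j ∈ P) :
    W B S (gPlat g P) (fun i _ => v i)
      - W B (S.erase j) (gPlat g P) (fun i _ => v i)
      = topSum v (B \ M₀.image Prod.fst) P.card
        - topSum v (B \ M₀.image Prod.fst) (P.card - 1) := by
  have h1 : S = (S \ P) ∪ P := (Finset.sdiff_union_of_subset hP).symm
  have h2 : S.erase j = (S \ P) ∪ P.erase j := by
    ext a
    simp only [Finset.mem_erase, Finset.mem_union, Finset.mem_sdiff]
    constructor
    · rintro ⟨haj, haS⟩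
      by_cases hp : a ∈ P
      · exact Or.inr ⟨haj, hp⟩
      · exact Or.inl ⟨haS, hp⟩
    · rintro (⟨haS, hp⟩ | ⟨haj, hp⟩)
      · exact ⟨fun h => hp (h ▸ hj), haS⟩
      · exact ⟨haj, hP hp⟩
  have e1 := W_plat B S P g v hv M₀ hM₀ hopt P Finset.Subset.rfl
  have e2 := W_plat B S P g v hv M₀ hM₀ hopt (P.erase j) (Finset.erase_subset _ _)
  rw [← h1] at e1
  rw [← h2] at e2
  rw [e1, e2, Finset.card_erase_of_mem hj]
  ring
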